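/- Let n be a nonnegative integer and define R_n(a,b,c) = (1−a)_n (b)_n · _4F_3(−n, a, a−c−n, c ; (a−n)/2, (1+a−n)/2, b ; 1/4), and V_n(x,y,z) = R_n( x−y−z, (2+3x−y−z−n)/2, (x+y−3z−n)/2 ). Let x, y, z ∈ ℂ and assume that for every permutation (x',y',z') of (x,y,z), setting a' = x'−y'−z' and b' = (2+3x'−y'−z'−n)/2, the quantities (a'−n)_{2n} and (b')_n are nonzero. Then V_n(x,y,z) is invariant under all six permutations of (x,y,z); that is, V_n(x,y,z) = V_n(x,z,y) = V_n(y,x,z) = V_n(y,z,x) = V_n(z,x,y) = V_n(z,y,x). -/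

import Mathlib

/-!
The duplication formula `((a-n)/2)_k ((1+a-n)/2)_k 4^k = (a-n)_{2k}` and the reflection
`(1-x-m)_m = (-1)^m (x)_m` clear the denominators of the `₄F₃`: the `k`-th term of `R n a b c`,
prefactor included, is `C(n,k) (c)_k (a-c-n)_k (1-b-n)_{n-k} (a-n+2k)_{n-k}`. Expanding
`(a-n+2k)_{n-k} = ((a-c-n+k) + (c+k))_{n-k}` by Chu–Vandermonde turns `R n a b c` into the
trinomial sum `∑_{i+j+k=n} n!/(i! j! k!) (α)_{n-i} (β)_{n-j} (γ)_{n-k}` with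
`(α, β, γ) = (1-b-n, c, a-c-n)`, which is symmetric in `α, β, γ`. For `V n x y z` these three
parameters are `(s-4x-n)/2, (s-4z-n)/2, (s-4y-n)/2` with `s = x+y+z`, so permuting `(x, y, z)`
only permutes them.
-/

open Finset

/-- The rising factorial (Pochhammer symbol) `(a)_k = a(a+1)⋯(a+k-1)`. -/
noncomputable def poch (a : ℂ) (k : ℕ) : ℂ := ∏ i ∈ Finset.range k, (a + i)

/-- `R n a b c = (1-a)_n (b)_n · ₄F₃(-n, a, a-c-n, c ; (a-n)/2, (1+a-n)/2, b ; 1/4)`. -/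
noncomputable def R (n : ℕ) (a b c : ℂ) : ℂ :=
  poch (1 - a) n * poch b n *
    ∑ k ∈ Finset.range (n + 1),
      (poch (-(n : ℂ)) k * poch a k * poch (a - c - (n : ℂ)) k * poch c k) /
        ((Nat.factorial k : ℂ) * poch ((a - (n : ℂ)) / 2) k *
          poch ((1 + a - (n : ℂ)) / 2) k * poch b k) * (1 / 4 : ℂ) ^ k

/-- `V n x y z = R n (x-y-z) ((2+3x-y-z-n)/2) ((x+y-3z-n)/2)`. -/
noncomputable def V (n : ℕ) (x y z : ℂ) : ℂ :=
  R n (x - y - z) ((2 + 3 * x - y - z - (n : ℂ)) / 2) ((x + y - 3 * z - (n : ℂ)) / 2)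

lemma poch_zero (a : ℂ) : poch a 0 = 1 := prod_range_zero _

lemma poch_succ (a : ℂ) (k : ℕ) : poch a (k + 1) = poch a k * (a + k) :=
  prod_range_succ _ _

lemma poch_succ' (a : ℂ) (k : ℕ) : poch a (k + 1) = a * poch (a + 1) k := by
  simp only [poch, prod_range_succ', Nat.cast_add, Nat.cast_one, Nat.cast_zero, add_zero,
    add_assoc, add_comm (1 : ℂ)]
  ring

lemma poch_add (a : ℂ) (m l : ℕ) : poch a (m + l) = poch a m * poch (a + m) l := by
  simp only [poch, prod_range_add, Nat.cast_add, add_assoc]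

lemma poch_ne_zero_of_le {a : ℂ} {m k : ℕ} (h : poch a m ≠ 0) (hk : k ≤ m) :
    poch a k ≠ 0 := by
  obtain ⟨l, rfl⟩ := Nat.exists_eq_add_of_le hk
  exact left_ne_zero_of_mul (poch_add a k l ▸ h)

lemma poch_one_sub_sub (x : ℂ) (m : ℕ) : poch (1 - x - m) m = (-1) ^ m * poch x m := by
  induction m with
  | zero => simp [poch_zero]
  | succ m ih =>
    rw [poch_succ', poch_succ, show 1 - x - ↑(m + 1) + 1 = 1 - x - m by push_cast; ring, ih]
    push_cast
    ring

lemma poch_half_mul_poch_half_mul_four_pow (a : ℂ) (k : ℕ) :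
    poch (a / 2) k * poch ((a + 1) / 2) k * 4 ^ k = poch a (2 * k) := by
  induction k with
  | zero => simp [poch_zero]
  | succ k ih =>
    rw [show 2 * (k + 1) = 2 * k + 1 + 1 by ring, poch_succ, poch_succ, poch_succ, poch_succ,
      ← ih]
    push_cast
    ring

lemma poch_neg_natCast (n k : ℕ) : poch (-n) k = (-1) ^ k * k.factorial * n.choose k := by
  rw [mul_assoc, ← Nat.cast_mul, ← Nat.descFactorial_eq_factorial_mul_choose]
  induction k with
  | zero => simp [poch_zero]
  | succ k ih =>
    rw [poch_succ, ih, Nat.descFactorial_succ]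
    rcases le_or_gt k n with h | h
    · push_cast [h]
      ring
    · simp [Nat.descFactorial_eq_zero_iff_lt.2 h]

lemma poch_add_eq_sum_antidiagonal (x y : ℂ) (m : ℕ) :
    poch (x + y) m =
      ∑ p ∈ antidiagonal m, (m.choose p.1 : ℂ) * (poch x p.1 * poch y p.2) := by
  induction m with
  | zero => simp [poch_zero]
  | succ m ih =>
    rw [sum_antidiagonal_choose_succ_mul (fun i j => poch x i * poch y j), ← sum_add_distrib,
      poch_succ, ih, sum_mul]
    refine sum_congr rfl fun p hp => ?_
    rw [HasAntidiagonal.mem_antidiagonal] at hp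
    rw [← Nat.choose_symm_of_eq_add hp.symm, poch_succ, poch_succ, ← hp]
    push_cast
    ring

lemma poch_one_sub_mul_poch (a : ℂ) {n k : ℕ} (hk : k ≤ n) :
    poch (1 - a) n * poch a k = (-1) ^ n * poch (a - n) (2 * k) * poch (a - n + 2 * k) (n - k) := by
  have hrefl := poch_one_sub_sub (a - n) n
  rw [show 1 - (a - n) - (n : ℂ) = 1 - a by ring] at hrefl
  calc poch (1 - a) n * poch a k = (-1) ^ n * poch (a - n) (n + k) := by
        rw [hrefl, poch_add, sub_add_cancel, mul_assoc]
    _ = (-1) ^ n * poch (a - n) (2 * k + (n - k)) := by rw [show n + k = 2 * k + (n - k) by omega]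
    _ = _ := by rw [poch_add, mul_assoc]; push_cast; rfl

lemma poch_eq_poch_mul_poch_one_sub (b : ℂ) {n k : ℕ} (hk : k ≤ n) :
    poch b n = poch b k * ((-1) ^ (n - k) * poch (1 - b - n) (n - k)) := by
  have hrefl := poch_one_sub_sub (b + k) (n - k)
  rw [Nat.cast_sub hk, show 1 - (b + k) - (n - k : ℂ) = 1 - b - n by ring] at hrefl
  rw [hrefl, ← mul_assoc ((-1 : ℂ) ^ (n - k)), ← pow_add, ← two_mul, pow_mul, neg_one_sq,
    one_pow, one_mul, ← poch_add, Nat.add_sub_cancel' hk]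

noncomputable def pochMultinomialSum {ι : Type*} [Fintype ι] [DecidableEq ι] (n : ℕ)
    (v : ι → ℂ) : ℂ :=
  ∑ f ∈ piAntidiag univ n, (Nat.multinomial univ f : ℂ) * ∏ i, poch (v i) (n - f i)

lemma Nat.multinomial_univ_comp_equiv {ι κ : Type*} [Fintype ι] [Fintype κ] (e : κ ≃ ι)
    (f : ι → ℕ) : Nat.multinomial univ (f ∘ e) = Nat.multinomial univ f := by
  simp only [Nat.multinomial, Function.comp_apply, Equiv.sum_comp e f,
    Equiv.prod_comp e fun i => (f i).factorial]

lemma pochMultinomialSum_comp_equiv {ι κ : Type*} [Fintype ι] [DecidableEq ι] [Fintype κ]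
    [DecidableEq κ] (n : ℕ) (v : ι → ℂ) (e : κ ≃ ι) :
    pochMultinomialSum n (v ∘ e) = pochMultinomialSum n v := by
  refine sum_nbij' (· ∘ e.symm) (· ∘ e) (fun f hf => ?_) (fun f hf => ?_)
    (fun f _ => by ext; simp) (fun f _ => by ext; simp) (fun f _ => ?_)
  · simpa [Equiv.sum_comp e.symm f] using hf
  · simpa [Equiv.sum_comp e f] using hf
  · rw [Nat.multinomial_univ_comp_equiv, ← Equiv.prod_comp e.symm]
    simp

lemma pochMultinomialSum_swap_left (n : ℕ) (a b c : ℂ) :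
    pochMultinomialSum n ![a, b, c] = pochMultinomialSum n ![b, a, c] := by
  rw [← pochMultinomialSum_comp_equiv n ![a, b, c] (Equiv.swap 0 1)]
  congr 1
  ext i
  fin_cases i <;> rfl

lemma pochMultinomialSum_swap_right (n : ℕ) (a b c : ℂ) :
    pochMultinomialSum n ![a, b, c] = pochMultinomialSum n ![a, c, b] := by
  rw [← pochMultinomialSum_comp_equiv n ![a, b, c] (Equiv.swap 1 2)]
  congr 1
  ext i
  fin_cases i <;> rfl

lemma Nat.multinomial_univ_fin_three (k j i : ℕ) :
    Nat.multinomial univ ![k, j, i] = (k + j + i).choose k * (j + i).choose j := by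
  refine Nat.eq_of_mul_eq_mul_left (by positivity : 0 < k.factorial * j.factorial * i.factorial) ?_
  have := Nat.multinomial_spec univ ![k, j, i]
  simp only [Fin.prod_univ_three, Fin.sum_univ_three, Matrix.cons_val] at this
  rw [this, add_assoc, ← Nat.add_choose_mul_factorial_mul_factorial k (j + i),
    ← Nat.add_choose_mul_factorial_mul_factorial j i, ← Nat.choose_symm_add,
    ← Nat.choose_symm_add]
  ring

lemma Finset.sum_piAntidiag_univ_fin_three {M : Type*} [AddCommMonoid M] (n : ℕ)
    (F : (Fin 3 → ℕ) → M) :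
    ∑ f ∈ piAntidiag univ n, F f =
      ∑ p ∈ antidiagonal n, ∑ q ∈ antidiagonal p.2, F ![p.1, q.1, q.2] := by
  rw [sum_sigma']
  refine sum_nbij' (fun f => ⟨(f 0, f 1 + f 2), (f 1, f 2)⟩) (fun x => ![x.1.1, x.2.1, x.2.2])
    (fun f hf => ?_) (fun x hx => ?_) (fun f _ => ?_) (fun x hx => ?_) (fun f _ => ?_)
  · simp_all [Fin.sum_univ_three, add_assoc]
  · simp_all [Fin.sum_univ_three]
    omega
  · ext i; fin_cases i <;> rfl
  · simp_all
  · congr; ext i; fin_cases i <;> rfl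

lemma R_summand_eq {n k : ℕ} (hk : k ≤ n) {a b : ℂ} (c : ℂ)
    (ha : poch (a - n) (2 * n) ≠ 0) (hb : poch b n ≠ 0) :
    poch (1 - a) n * poch b n *
      ((poch (-(n : ℂ)) k * poch a k * poch (a - c - (n : ℂ)) k * poch c k) /
        ((Nat.factorial k : ℂ) * poch ((a - (n : ℂ)) / 2) k *
          poch ((1 + a - (n : ℂ)) / 2) k * poch b k) * (1 / 4 : ℂ) ^ k) =
      n.choose k * poch (a - c - n) k * poch c k * poch (1 - b - n) (n - k) *
        poch (a - n + 2 * k) (n - k) := by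
  have h2k : poch (a - n) (2 * k) ≠ 0 := poch_ne_zero_of_le ha (by omega)
  have hbk : poch b k ≠ 0 := poch_ne_zero_of_le hb hk
  have hfact : (k.factorial : ℂ) ≠ 0 := Nat.cast_ne_zero.2 k.factorial_ne_zero
  have hdup := poch_half_mul_poch_half_mul_four_pow (a - n) k
  rw [show (a - n + 1) / 2 = (1 + a - n) / 2 by ring] at hdup
  have hsign : ((-1 : ℂ) ^ n * (-1) ^ (n - k) * (-1) ^ k) = 1 := by
    rw [← pow_add, ← pow_add, show n + (n - k) + k = 2 * n by omega, pow_mul, neg_one_sq,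
      one_pow]
  calc _ = (poch (1 - a) n * poch a k) * poch b n * poch (-(n : ℂ)) k *
        poch (a - c - n) k * poch c k /
        ((Nat.factorial k : ℂ) * (poch ((a - n) / 2) k * poch ((1 + a - n) / 2) k * 4 ^ k) *
          poch b k) := by
        rw [one_div, inv_pow]
        field_simp
    _ = ((-1) ^ n * poch (a - n) (2 * k) * poch (a - n + 2 * k) (n - k)) *
        (poch b k * ((-1) ^ (n - k) * poch (1 - b - n) (n - k))) *
        ((-1) ^ k * k.factorial * n.choose k) * poch (a - c - n) k * poch c k /
        ((Nat.factorial k : ℂ) * poch (a - n) (2 * k) * poch b k) := by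
      rw [poch_one_sub_mul_poch a hk, ← poch_eq_poch_mul_poch_one_sub b hk, poch_neg_natCast,
        hdup]
    _ = _ := by
      field_simp
      linear_combination (n.choose k * poch (a - c - n) k * poch c k * poch (1 - b - n) (n - k) *
        poch (a - n + 2 * k) (n - k)) * hsign

lemma R_eq_pochMultinomialSum (n : ℕ) {a b : ℂ} (c : ℂ) (ha : poch (a - n) (2 * n) ≠ 0)
    (hb : poch b n ≠ 0) :
    R n a b c = pochMultinomialSum n ![1 - b - n, c, a - c - n] := by
  rw [R, mul_sum, pochMultinomialSum, sum_piAntidiag_univ_fin_three,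
    Nat.sum_antidiagonal_eq_sum_range_succ_mk]
  refine sum_congr rfl fun k hk => ?_
  have hkn : k ≤ n := Nat.lt_succ_iff.1 (mem_range.1 hk)
  rw [R_summand_eq hkn c ha hb,
    show a - n + 2 * k = (a - c - n + k) + (c + k) by ring, poch_add_eq_sum_antidiagonal, mul_sum]
  refine sum_congr rfl fun ⟨j, i⟩ hji => ?_
  simp only [HasAntidiagonal.mem_antidiagonal] at hji
  simp only [Nat.multinomial_univ_fin_three, Fin.prod_univ_three, Matrix.cons_val]
  rw [show k + j + i = n by omega, ← hji, show n - j = k + i by omega,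
    show n - i = k + j by omega, poch_add c, poch_add (a - c - n)]
  push_cast
  ring

/-- Stated for any `s = x + y + z`, so that for the six permutations of `(x, y, z)` the vectors on
the right are literal permutations of one another. -/
lemma V_eq_pochMultinomialSum {n : ℕ} {x y z s : ℂ} (hs : x + y + z = s)
    (ha : poch (x - y - z - n) (2 * n) ≠ 0) (hb : poch ((2 + 3 * x - y - z - n) / 2) n ≠ 0) :
    V n x y z =
      pochMultinomialSum n ![(s - 4 * x - n) / 2, (s - 4 * z - n) / 2, (s - 4 * y - n) / 2] := by
  rw [V, R_eq_pochMultinomialSum n _ ha hb]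
  subst hs
  congr 1
  ext i
  fin_cases i <;> simp only [Fin.reduceFinMk, Matrix.cons_val] <;> ring

theorem stmt_14 (n : ℕ) (x y z : ℂ)
    (h : ∀ p : ℂ × ℂ × ℂ,
      p ∈ ({(x, y, z), (x, z, y), (y, x, z), (y, z, x), (z, x, y), (z, y, x)} :
        Set (ℂ × ℂ × ℂ)) →
      poch (p.1 - p.2.1 - p.2.2 - (n : ℂ)) (2 * n) ≠ 0 ∧
      poch ((2 + 3 * p.1 - p.2.1 - p.2.2 - (n : ℂ)) / 2) n ≠ 0) :
    V n x y z = V n x z y ∧ V n x y z = V n y x z ∧ V n x y z = V n y z x ∧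
      V n x y z = V n z x y ∧ V n x y z = V n z y x := by
  have hV := fun x' y' z' hp (hs : x' + y' + z' = x + y + z) =>
    V_eq_pochMultinomialSum hs (h (x', y', z') hp).1 (h (x', y', z') hp).2
  rw [hV x y z (by simp) rfl, hV x z y (by simp) (by ring), hV y x z (by simp) (by ring),
    hV y z x (by simp) (by ring), hV z x y (by simp) (by ring), hV z y x (by simp) (by ring)]
  refine ⟨?_, ?_, ?_, ?_, ?_⟩
  · rw [pochMultinomialSum_swap_right]
  · rw [pochMultinomialSum_swap_left, pochMultinomialSum_swap_right, pochMultinomialSum_swap_left]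
  · rw [pochMultinomialSum_swap_right, pochMultinomialSum_swap_left]
  · rw [pochMultinomialSum_swap_left, pochMultinomialSum_swap_right]
  · rw [pochMultinomialSum_swap_left]
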